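/- Fix λ ∈ ℤ and let a, b, c ∈ ℝ. If the alternating bilinear form a·γ_LL + b·γ_LD + c·γ_DD on 𝔴_λ is a coboundary, i.e. there exists a linear functional β : 𝔴_λ → ℝ with (a·γ_LL + b·γ_LD + c·γ_DD)(X,Y) = −β([X,Y]) for all X, Y ∈ 𝔴_λ, then a = b = c = 0. Hence the cohomology classes of γ_LL, γ_LD and γ_DD are linearly independent in H²(𝔴_λ; ℝ). -/
import Mathlib


/-- Basis labels for the centreless Weyl λ-BMS algebra. -/
inductive WGen : Type
  | L : ℤ → WGen
  | D : ℤ → WGen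
  | P : ℤ → WGen

/-- The bracket on basis elements of the centreless Weyl λ-BMS algebra. -/
noncomputable def wbGen (lam : ℤ) : WGen → WGen → (WGen →₀ ℝ)
  | WGen.L n, WGen.L m => ((n : ℝ) - m) • Finsupp.single (WGen.L (n + m)) 1
  | WGen.L n, WGen.D m => (-(m : ℝ)) • Finsupp.single (WGen.D (n + m)) 1
  | WGen.D m, WGen.L n => ((m : ℝ)) • Finsupp.single (WGen.D (n + m)) 1
  | WGen.L n, WGen.P m => (-((m : ℝ) + (lam : ℝ) * n)) • Finsupp.single (WGen.P (n + m)) 1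
  | WGen.P m, WGen.L n => (((m : ℝ) + (lam : ℝ) * n)) • Finsupp.single (WGen.P (n + m)) 1
  | WGen.D n, WGen.P m => Finsupp.single (WGen.P (n + m)) 1
  | WGen.P m, WGen.D n => -(Finsupp.single (WGen.P (n + m)) 1)
  | _, _ => 0

/-- The bilinear extension of `wbGen` to the free real vector space on `WGen`. -/
noncomputable def wbr (lam : ℤ) (x y : WGen →₀ ℝ) : WGen →₀ ℝ :=
  x.sum fun gx cx => y.sum fun gy cy => (cx * cy) • wbGen lam gx gy

/-- `γ_LL(L_n, L_m) = (1/12) n(n²-1) δ_{n+m,0}`, zero on other basis pairs. -/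
noncomputable def gLL : WGen → WGen → ℝ
  | WGen.L n, WGen.L m => if n + m = 0 then (1 / 12 : ℝ) * n * ((n : ℝ) ^ 2 - 1) else 0
  | _, _ => 0

/-- `γ_LD(L_n, D_m) = (1/2) n(n+1) δ_{n+m,0}`, extended antisymmetrically,
zero on other basis pairs. -/
noncomputable def gLD : WGen → WGen → ℝ
  | WGen.L n, WGen.D m => if n + m = 0 then (1 / 2 : ℝ) * n * ((n : ℝ) + 1) else 0
  | WGen.D m, WGen.L n => if n + m = 0 then -((1 / 2 : ℝ) * n * ((n : ℝ) + 1)) else 0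
  | _, _ => 0

/-- `γ_DD(D_n, D_m) = n δ_{n+m,0}`, zero on other basis pairs. -/
noncomputable def gDD : WGen → WGen → ℝ
  | WGen.D n, WGen.D m => if n + m = 0 then (n : ℝ) else 0
  | _, _ => 0

/-- The bilinear extension of a form on basis elements to `WGen →₀ ℝ`. -/
noncomputable def cExt (γ : WGen → WGen → ℝ) (x y : WGen →₀ ℝ) : ℝ :=
  x.sum fun gx cx => y.sum fun gy cy => cx * cy * γ gx gy

lemma cExt_single (γ : WGen → WGen → ℝ) (g h : WGen) :
    cExt γ (Finsupp.single g 1) (Finsupp.single h 1) = γ g h := by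
  simp [cExt, Finsupp.sum_single_index]

lemma wbr_single (lam : ℤ) (g h : WGen) :
    wbr lam (Finsupp.single g 1) (Finsupp.single h 1) = wbGen lam g h := by
  simp [wbr, Finsupp.sum_single_index]

/-- Fix `λ ∈ ℤ`.  If the 2-cocycle `a·γ_LL + b·γ_LD + c·γ_DD` on the centreless
Weyl λ-BMS algebra is a coboundary, i.e. equals `(X,Y) ↦ -β([X,Y])` for some
linear functional `β`, then `a = b = c = 0`; hence the classes of `γ_LL`,
`γ_LD` and `γ_DD` are linearly independent in `H²(𝔴_λ; ℝ)`. -/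
theorem weyl_lambda_bms_cocycles_independent (lam : ℤ) (a b c : ℝ)
    (β : (WGen →₀ ℝ) →ₗ[ℝ] ℝ)
    (hcob : ∀ x y : WGen →₀ ℝ,
      a * cExt gLL x y + b * cExt gLD x y + c * cExt gDD x y = -β (wbr lam x y)) :
    a = 0 ∧ b = 0 ∧ c = 0 := by
  have key : ∀ g h : WGen, a * gLL g h + b * gLD g h + c * gDD g h
      = -β (wbGen lam g h) := by
    intro g h
    have := hcob (Finsupp.single g 1) (Finsupp.single h 1)
    rwa [cExt_single, cExt_single, cExt_single, wbr_single] at this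
  have hc : c = 0 := by
    have := key (WGen.D 1) (WGen.D (-1))
    simpa [gLL, gLD, gDD, wbGen] using this
  have hL0 : β (Finsupp.single (WGen.L 0) (2:ℝ)) = 0 := by
    have := key (WGen.L 1) (WGen.L (-1))
    simp [gLL, gLD, gDD, wbGen] at this
    have h1 : β (Finsupp.single (WGen.L 0) (1:ℝ)) = 0 := by linarith
    have h2 : Finsupp.single (WGen.L 0) (2:ℝ) = (2:ℝ) • Finsupp.single (WGen.L 0) (1:ℝ) := by
      rw [Finsupp.smul_single]; norm_num
    rw [h2, map_smul, h1, smul_zero]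
  have ha : a = 0 := by
    have := key (WGen.L 2) (WGen.L (-2))
    simp [gLL, gLD, gDD, wbGen, hL0] at this
    rcases this with h | h
    · exact h
    · norm_num at h
  have hD0 : β (Finsupp.single (WGen.D 0) (1:ℝ)) = 0 := by
    have := key (WGen.L (-1)) (WGen.D 1)
    simp [gLL, gLD, gDD, wbGen] at this
    linarith
  have hb : b = 0 := by
    have := key (WGen.L 1) (WGen.D (-1))
    simp [gLL, gLD, gDD, wbGen, hD0] at this
    linarith
  exact ⟨ha, hb, hc⟩
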